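/- Suppose the scheduler guarantees δ_t ≥ exp(−C₅/σ(t)) for all t, with σ(t) ≥ C₅/log(t+2) monotone decreasing and C₅ > 0, and that ‖p(t,x̄,t+τ,·) − p(t,x,t+τ,·)‖ ≤ 2M·∏_{k=0}^{τ−1}(1−δ_{t+k}) with each δ_t ∈ [0,1]. Then sup_{x̄,x} ‖p(t, x̄, t+τ, ·) − p(t, x, t+τ, ·)‖ → 0 as τ → ∞. -/
import Mathlib


open Filter Finset Real

private lemma telescope_prod (t : ℕ) : ∀ τ : ℕ,
    (∏ k ∈ Finset.range τ, (((t:ℝ) + k + 1) / ((t:ℝ) + k + 2)))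
      = ((t:ℝ) + 1) / ((t:ℝ) + τ + 1) := by
  intro τ
  induction τ with
  | zero =>
      simp only [Finset.prod_range_zero, Nat.cast_zero, add_zero]
      rw [div_self (by positivity)]
  | succ n ih =>
      rw [Finset.prod_range_succ, ih]
      have h1 : (t:ℝ) + n + 1 ≠ 0 := by positivity
      have h2 : (t:ℝ) + n + 2 ≠ 0 := by positivity
      push_cast
      rw [div_mul_div_comm, div_eq_div_iff (by positivity) (by positivity)]
      ring

/-- `d τ xb x` stands for `‖p(t, xb, t+τ, ·) − p(t, x, t+τ, ·)‖` and
`δ k = inf_{x,y} p(k, x, k+1, y)`. -/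
theorem quantized_scheduler_loss_of_memory {α : Type*} [Nonempty α]
    (t : ℕ) (C₅ : ℝ) (hC : 0 < C₅)
    (σ : ℕ → ℝ) (hσpos : ∀ k, 0 < σ k) (hσmono : Antitone σ)
    (hσlb : ∀ k : ℕ, C₅ / Real.log ((k : ℝ) + 2) ≤ σ k)
    (δ : ℕ → ℝ) (hδ0 : ∀ k, 0 ≤ δ k) (hδ1 : ∀ k, δ k ≤ 1)
    (hδlb : ∀ k, Real.exp (-(C₅ / σ k)) ≤ δ k)
    (M : ℝ) (hM : 0 < M) (d : ℕ → α → α → ℝ) (hd0 : ∀ τ xb x, 0 ≤ d τ xb x)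
    (hbound : ∀ τ xb x, d τ xb x ≤ 2 * M * ∏ k ∈ range τ, (1 - δ (t + k))) :
    Tendsto (fun τ => ⨆ xb : α, ⨆ x : α, d τ xb x) atTop (nhds 0) := by
  -- Step 1 : δ k ≥ 1/(k+2)
  have hδinv : ∀ k : ℕ, 1 / ((k:ℝ) + 2) ≤ δ k := by
    intro k
    have hlogpos : 0 < Real.log ((k:ℝ) + 2) := by
      apply Real.log_pos; push_cast; linarith [Nat.cast_nonneg (α := ℝ) k]
    have h1 : C₅ / σ k ≤ Real.log ((k:ℝ) + 2) := by
      rw [div_le_iff₀ (hσpos k)]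
      have := hσlb k
      rw [div_le_iff₀ hlogpos] at this
      linarith [mul_comm (σ k) (Real.log ((k:ℝ) + 2))]
    calc 1 / ((k:ℝ) + 2) = Real.exp (-(Real.log ((k:ℝ) + 2))) := by
            rw [Real.exp_neg, Real.exp_log (by positivity)]; ring
      _ ≤ Real.exp (-(C₅ / σ k)) := Real.exp_le_exp.2 (by linarith)
      _ ≤ δ k := hδlb k
  -- Step 2: product bound
  have hprod : ∀ τ : ℕ, (∏ k ∈ range τ, (1 - δ (t + k)))
      ≤ ((t:ℝ) + 1) / ((t:ℝ) + τ + 1) := by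
    intro τ
    rw [← telescope_prod t τ]
    apply Finset.prod_le_prod
    · intro k _; linarith [hδ1 (t + k)]
    · intro k _
      have := hδinv (t + k)
      have h2 : ((t:ℝ) + k + 1) / ((t:ℝ) + k + 2) = 1 - 1 / ((t:ℝ) + k + 2) := by
        field_simp
        ring
      rw [h2]
      have : 1 / ((t:ℝ) + k + 2) ≤ δ (t + k) := by
        have hc : ((t + k : ℕ) : ℝ) = (t:ℝ) + k := by push_cast; ring
        calc 1 / ((t:ℝ) + k + 2) = 1 / (((t + k : ℕ):ℝ) + 2) := by rw [hc]
          _ ≤ δ (t + k) := hδinv (t + k)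
      linarith
  have hprodnn : ∀ τ : ℕ, 0 ≤ (∏ k ∈ range τ, (1 - δ (t + k))) := by
    intro τ
    apply Finset.prod_nonneg
    intro k _; linarith [hδ1 (t + k)]
  -- Step 3: squeeze
  have h0 : ∀ τ : ℕ, 0 ≤ ⨆ xb : α, ⨆ x : α, d τ xb x := by
    intro τ
    exact Real.iSup_nonneg fun xb => Real.iSup_nonneg fun x => hd0 τ xb x
  have hub : ∀ τ : ℕ, (⨆ xb : α, ⨆ x : α, d τ xb x)
      ≤ 2 * M * (((t:ℝ) + 1) / ((t:ℝ) + τ + 1)) := by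
    intro τ
    apply Real.iSup_le _ (by positivity)
    intro xb
    apply Real.iSup_le _ (by positivity)
    intro x
    calc d τ xb x ≤ 2 * M * ∏ k ∈ range τ, (1 - δ (t + k)) := hbound τ xb x
      _ ≤ 2 * M * (((t:ℝ) + 1) / ((t:ℝ) + τ + 1)) := by
          apply mul_le_mul_of_nonneg_left (hprod τ) (by positivity)
  have hlim : Tendsto (fun τ : ℕ => 2 * M * (((t:ℝ) + 1) / ((t:ℝ) + τ + 1)))
      atTop (nhds 0) := by
    have h1 : Tendsto (fun τ : ℕ => (2 * M * ((t:ℝ) + 1)) / ((τ:ℝ) + ((t:ℝ) + 1)))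
        atTop (nhds 0) := by
      apply Filter.Tendsto.div_atTop tendsto_const_nhds
      exact Filter.tendsto_atTop_add_const_right _ _ tendsto_natCast_atTop_atTop
    convert h1 using 2 with τ
    ring
  exact tendsto_of_tendsto_of_tendsto_of_le_of_le tendsto_const_nhds hlim h0 hub
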